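/- arXiv:2311.14565 — 5 statements merged into one kernel-verified Lean document; each statement's English description precedes it below -/
import Mathlib

section
/- For all real numbers x and d, and all b in [-1/2, 1/2], it holds that |log(1 + ((1+b)x + d)^2) - log(1 + x^2)| ≤ 4|b| + |d|. -/
/-!
Split the perturbation into the scaling `x ↦ (1 + b) * x` and the shift by `d`. The shift costs
at most `|d|`, since `t ↦ log (1 + t ^ 2)` has derivative `2 t / (1 + t ^ 2) ∈ [-1, 1]`. The scaling
multiplies `1 + x ^ 2` by a factor between `1` and `(1 + b) ^ 2`, so it costs at most
`2 |log (1 + b)| ≤ 4 |b|`.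
-/

open Real

theorem hasDerivAt_log_one_add_sq (t : ℝ) :
    HasDerivAt (fun t : ℝ => log (1 + t ^ 2)) (2 * t / (1 + t ^ 2)) t := by
  simpa using ((hasDerivAt_pow 2 t).const_add 1).log (by positivity)

theorem lipschitzWith_log_one_add_sq : LipschitzWith 1 (fun t : ℝ => log (1 + t ^ 2)) := by
  refine lipschitzWith_of_nnnorm_deriv_le
    (fun t => (hasDerivAt_log_one_add_sq t).differentiableAt) fun t => ?_
  rw [(hasDerivAt_log_one_add_sq t).deriv, ← NNReal.coe_le_coe, coe_nnnorm, NNReal.coe_one,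
    Real.norm_eq_abs, abs_div, abs_of_pos (by positivity : (0 : ℝ) < 1 + t ^ 2),
    div_le_one (by positivity), abs_mul, abs_two]
  nlinarith [two_mul_le_add_sq |t| 1, sq_abs t]

theorem abs_log_one_add_sq_sub_le (a c : ℝ) :
    |log (1 + a ^ 2) - log (1 + c ^ 2)| ≤ |a - c| := by
  simpa [Real.dist_eq] using lipschitzWith_log_one_add_sq.dist_le_mul a c

theorem abs_log_one_add_mul_sub_le {c y : ℝ} (hc : 0 < c) (hy : 0 ≤ y) :
    |log (1 + c * y) - log (1 + y)| ≤ |log c| := by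
  wlog hc1 : 1 ≤ c generalizing c y
  · -- apply the case `1 ≤ c⁻¹` to `c * y`
    have h := this (inv_pos.2 hc) (mul_nonneg hc.le hy) (one_le_inv₀ hc |>.2 (not_le.1 hc1).le)
    rwa [inv_mul_cancel_left₀ hc.ne', log_inv, abs_neg, abs_sub_comm] at h
  have hlow : 1 + y ≤ 1 + c * y := by nlinarith
  have hhigh : 1 + c * y ≤ c * (1 + y) := by nlinarith
  have h1 := log_le_log (by positivity) hlow
  have h2 := log_le_log (by positivity) hhigh
  rw [log_mul hc.ne' (by positivity)] at h2
  rw [abs_of_nonneg (by linarith), abs_of_nonneg (log_nonneg hc1)]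
  linarith

theorem abs_log_one_add_le {b : ℝ} (hb : |b| < 1) : |log (1 + b)| ≤ |b| / (1 - |b|) := by
  simpa [sub_eq_add_neg] using abs_log_sub_add_sum_range_le (x := -b) (by rwa [abs_neg]) 0

theorem log_affine_perturbation (x d b : ℝ) (hb : b ∈ Set.Icc (-(1/2) : ℝ) (1/2)) :
    |Real.log (1 + ((1 + b) * x + d) ^ 2) - Real.log (1 + x ^ 2)| ≤ 4 * |b| + |d| := by
  have hb_abs : |b| ≤ 1 / 2 := abs_le.2 hb
  have hc : 0 < 1 + b := by linarith [neg_abs_le b]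
  have hlog : |log (1 + b)| ≤ 2 * |b| :=
    (abs_log_one_add_le (by linarith)).trans <| by
      rw [div_le_iff₀ (by linarith)]; nlinarith [abs_nonneg b]
  have hscale : |log (1 + ((1 + b) * x) ^ 2) - log (1 + x ^ 2)| ≤ 2 * |log (1 + b)| := by
    simpa [mul_pow, log_pow, abs_mul] using
      abs_log_one_add_mul_sub_le (pow_pos hc 2) (sq_nonneg x)
  have hshift := abs_log_one_add_sq_sub_le ((1 + b) * x + d) ((1 + b) * x)
  rw [add_sub_cancel_left] at hshift
  linarith [abs_sub_le (log (1 + ((1 + b) * x + d) ^ 2)) (log (1 + ((1 + b) * x) ^ 2))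
    (log (1 + x ^ 2))]
end

section
/- For all real numbers x, d and all b in [-1/2, 1/2], it holds that |log(1 + (1+b)^2 x^2) - log(1 + x^2)| ≤ 4|b|. -/
theorem log_multiplicative_perturbation (x b : ℝ) (hb : b ∈ Set.Icc (-(1/2) : ℝ) (1/2)) :
    |Real.log (1 + (1 + b) ^ 2 * x ^ 2) - Real.log (1 + x ^ 2)| ≤ 4 * |b| := by
  obtain ⟨hb1, hb2⟩ := hb
  set c := |b| with hc
  have hc0 : 0 ≤ c := abs_nonneg b
  have hcb : c ≤ 1/2 := abs_le.mpr ⟨by linarith, hb2⟩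
  have hbc1 : b ≤ c := le_abs_self b
  have hbc2 : -c ≤ b := neg_abs_le b
  have hx2 : (0:ℝ) < 1 + x^2 := by positivity
  have hA : (0:ℝ) < 1 + (1+b)^2 * x^2 := by positivity
  have h1c : (0:ℝ) < 1 - c := by linarith
  have h1c' : (0:ℝ) < 1 + c := by linarith
  -- sandwich
  have hupper : 1 + (1+b)^2 * x^2 ≤ (1+c)^2 * (1 + x^2) := by
    nlinarith [mul_nonneg (mul_nonneg (sub_nonneg.mpr hbc1) (show (0:ℝ) ≤ 2+c+b by linarith)) (sq_nonneg x)]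
  have hlower : (1-c)^2 * (1 + x^2) ≤ 1 + (1+b)^2 * x^2 := by
    nlinarith [mul_nonneg (mul_nonneg (show (0:ℝ) ≤ b+c by linarith) (show (0:ℝ) ≤ 2+b-c by linarith)) (sq_nonneg x)]
  have hlogU : Real.log (1 + (1+b)^2 * x^2) ≤ 2 * Real.log (1+c) + Real.log (1+x^2) := by
    calc Real.log (1 + (1+b)^2 * x^2) ≤ Real.log ((1+c)^2 * (1+x^2)) :=
          Real.log_le_log hA hupper
      _ = 2 * Real.log (1+c) + Real.log (1+x^2) := by
          rw [Real.log_mul (by positivity) (ne_of_gt hx2), Real.log_pow]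
          ring
  have hlogL : 2 * Real.log (1-c) + Real.log (1+x^2) ≤ Real.log (1 + (1+b)^2 * x^2) := by
    calc 2 * Real.log (1-c) + Real.log (1+x^2)
        = Real.log ((1-c)^2 * (1+x^2)) := by
          rw [Real.log_mul (by positivity) (ne_of_gt hx2), Real.log_pow]
          ring
      _ ≤ Real.log (1 + (1+b)^2 * x^2) := Real.log_le_log (by positivity) hlower
  have hlog1 : Real.log (1+c) ≤ c := by
    have := Real.log_le_sub_one_of_pos h1c'
    linarith
  have hlog2 : -(2*c) ≤ Real.log (1-c) := by
    have h := Real.log_le_sub_one_of_pos (inv_pos.mpr h1c)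
    rw [Real.log_inv] at h
    have hinv : (1-c)⁻¹ ≤ 1 + 2*c := by
      rw [inv_le_iff_one_le_mul₀ h1c]
      nlinarith
    linarith
  rw [abs_le]
  constructor <;> nlinarith
end

section
/- Let I be a nonempty countable set and f : I → [0,∞) a function such that S := ∑_{i∈I} f(i), R := ∑_{i∈I} √(f(i)) are finite, and M := max{f(i) : i ∈ I} is attained. Then √(S - M) ≤ 3(R - √S). -/
/-- Quantitative subadditivity of the square root. -/
theorem quantitative_sqrt_subadditivity {I : Type*} [Countable I] [Nonempty I]
    (f : I → ℝ) (hf : ∀ i, 0 ≤ f i)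
    (hS : Summable f) (hR : Summable fun i => Real.sqrt (f i))
    (i₀ : I) (hM : ∀ i, f i ≤ f i₀) :
    Real.sqrt ((∑' i, f i) - f i₀) ≤
      3 * ((∑' i, Real.sqrt (f i)) - Real.sqrt (∑' i, f i)) := by
  classical
  by_cases hMz : f i₀ = 0
  · have hfz : ∀ i, f i = 0 := fun i => le_antisymm (hMz ▸ hM i) (hf i)
    simp [hfz]
  have hMpos : 0 < f i₀ := lt_of_le_of_ne (hf i₀) (Ne.symm hMz)
  set g : I → ℝ := fun i => if i = i₀ then 0 else f i with hg
  have hg0 : ∀ i, 0 ≤ g i := by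
    intro i; by_cases h : i = i₀ <;> simp [hg, h, hf i, hf i₀]
  have hgle : ∀ i, g i ≤ f i := by
    intro i; by_cases h : i = i₀ <;> simp [hg, h, hf i, hf i₀]
  have hgM : ∀ i, g i ≤ f i₀ := fun i => (hgle i).trans (hM i)
  have hgsum : Summable g := Summable.of_nonneg_of_le hg0 hgle hS
  have hsqg : ∀ i, Real.sqrt (g i) = if i = i₀ then 0 else Real.sqrt (f i) := by
    intro i; by_cases h : i = i₀ <;> simp [hg, h]
  have hgsqsum : Summable fun i => Real.sqrt (g i) := by
    apply Summable.of_nonneg_of_le (fun i => Real.sqrt_nonneg _)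
      (fun i => Real.sqrt_le_sqrt (hgle i)) hR
  have hSsplit : (∑' i, f i) = f i₀ + ∑' i, g i := Summable.tsum_eq_add_tsum_ite hS i₀
  have hRsplit : (∑' i, Real.sqrt (f i))
      = Real.sqrt (f i₀) + ∑' i, Real.sqrt (g i) := by
    rw [Summable.tsum_eq_add_tsum_ite hR i₀]
    congr 1
    exact tsum_congr fun i => (hsqg i).symm
  set T := ∑' i, g i with hT
  set R' := ∑' i, Real.sqrt (g i) with hR'
  have hT0 : 0 ≤ T := tsum_nonneg hg0
  have hR'0 : 0 ≤ R' := tsum_nonneg fun i => Real.sqrt_nonneg _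
  have hsqrtM : 0 < Real.sqrt (f i₀) := Real.sqrt_pos.2 hMpos
  -- fact 1 : T ≤ R' * R'
  have key : ∀ c : ℝ, 0 ≤ c → (∀ i, Real.sqrt (g i) ≤ c) → T ≤ R' * c := by
    intro c hc hle
    calc T ≤ ∑' i, Real.sqrt (g i) * c := by
            apply Summable.tsum_le_tsum _ hgsum (hgsqsum.mul_right c)
            intro i
            have h' : Real.sqrt (g i) * Real.sqrt (g i) = g i :=
              Real.mul_self_sqrt (hg0 i)
            nlinarith [hle i, Real.sqrt_nonneg (g i)]
      _ = R' * c := by rw [tsum_mul_right]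
  have h1 : T ≤ R' * R' := key R' hR'0 fun i =>
    Summable.le_tsum hgsqsum i fun j _ => Real.sqrt_nonneg _
  have h2 : T ≤ R' * Real.sqrt (f i₀) := key _ (Real.sqrt_nonneg _)
    fun i => Real.sqrt_le_sqrt (hgM i)
  -- fact 3 : sqrt S ≤ sqrt M + T/(2 sqrt M)
  have h3 : Real.sqrt (∑' i, f i)
      ≤ Real.sqrt (f i₀) + T / (2 * Real.sqrt (f i₀)) := by
    rw [hSsplit]
    have hb : 0 ≤ Real.sqrt (f i₀) + T / (2 * Real.sqrt (f i₀)) := by positivity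
    rw [← Real.sqrt_sq hb]
    apply Real.sqrt_le_sqrt
    have hsq : Real.sqrt (f i₀) ^ 2 = f i₀ := Real.sq_sqrt (hf i₀)
    set d := T / (2 * Real.sqrt (f i₀)) with hd
    have hd2 : 2 * Real.sqrt (f i₀) * d = T := by
      rw [hd]; field_simp
    nlinarith [sq_nonneg d, hsq]
  have h4 : Real.sqrt T ≤ R' := by
    calc Real.sqrt T ≤ Real.sqrt (R' * R') := Real.sqrt_le_sqrt h1
      _ = R' := by rw [Real.sqrt_mul_self hR'0]
  have h5 : T / (2 * Real.sqrt (f i₀)) ≤ R' / 2 := by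
    rw [div_le_div_iff₀ (by positivity) (by norm_num)]
    nlinarith [h2, hsqrtM]
  have hST : (∑' i, f i) - f i₀ = T := by linarith
  rw [hST, hRsplit]
  linarith
end

section
/- Let a < b and let w ∈ H²((a,b)) satisfy w(a) = A₀, w'(a) = A₁, w(b) = B₀, w'(b) = B₁. Then ∫_a^b w''(y)² dy ≥ (B₁ - A₁)²/(b-a) + (12/(b-a)³)·( (B₀ - A₀) - (A₁ + B₁)(b-a)/2 )². -/
/-!
Write `g = w''` and `m = (a + b) / 2`. The constants `1` and `y - m` are orthogonal in `L²(a, b)`,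
with squared norms `b - a` and `(b - a)³ / 12`, so Bessel's inequality gives
`∫ g² ≥ (∫ g)² / (b - a) + 12 / (b - a)³ · (∫ (y - m) g)²`. The boundary data determine both
moments: `∫ g = w'(b) - w'(a)`, and integrating by parts against the absolutely continuous
primitive `w' - w'(a)` of `g` gives `∫ (y - m) g = (A₁ + B₁)(b - a)/2 - (B₀ - A₀)`.
-/

open MeasureTheory intervalIntegral

/-- `w` is an H² function on `(a,b)` with first derivative `w'` and second derivative `w''`:
`w` is C¹ on `[a,b]`, and `w'` is the integral of the square-integrable function `w''`. -/
def IsH2On (a b : ℝ) (w w' w'' : ℝ → ℝ) : Prop :=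
  (∀ x ∈ Set.Icc a b, w x = w a + ∫ t in a..x, w' t) ∧
  (∀ x ∈ Set.Icc a b, w' x = w' a + ∫ t in a..x, w'' t) ∧
  IntervalIntegrable w' volume a b ∧
  IntervalIntegrable w'' volume a b ∧
  IntervalIntegrable (fun t => (w'' t) ^ 2) volume a b

theorem AbsolutelyContinuousOnInterval.integral_mul_eq_sub_integral_deriv_mul_primitive
    {f g : ℝ → ℝ} {a b : ℝ} (hf : AbsolutelyContinuousOnInterval f a b)
    (hg : IntervalIntegrable g volume a b) :
    ∫ x in a..b, f x * g x =
      f b * (∫ x in a..b, g x) - ∫ x in a..b, deriv f x * ∫ t in a..x, g t := by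
  have hG := hg.absolutelyContinuousOnInterval_intervalIntegral Set.left_mem_uIcc
  have hderiv : ∫ x in a..b, f x * g x =
      ∫ x in a..b, f x * deriv (fun x ↦ ∫ t in a..x, g t) x := by
    refine integral_congr_ae ?_
    filter_upwards [hg.ae_hasDerivAt_integral] with x hx hxab
    rw [(hx (Set.uIoc_subset_uIcc hxab) a Set.left_mem_uIcc).deriv]
  rw [hderiv, hf.integral_mul_deriv_eq_deriv_mul hG, integral_same, mul_zero, sub_zero]

theorem integral_add_mul_sub_midpoint_sq (α β a b : ℝ) :
    ∫ y in a..b, (α + β * (y - (a + b) / 2)) ^ 2 =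
      α ^ 2 * (b - a) + β ^ 2 * ((b - a) ^ 3 / 12) := by
  have hint {f : ℝ → ℝ} (hf : Continuous f) :
      IntervalIntegrable f volume (a - (a + b) / 2) (b - (a + b) / 2) :=
    hf.intervalIntegrable _ _
  have hexpand : (fun y ↦ (α + β * y) ^ 2) = fun y ↦ α ^ 2 + 2 * α * β * y + β ^ 2 * y ^ 2 := by
    ext y; ring
  rw [integral_comp_sub_right (fun y ↦ (α + β * y) ^ 2), hexpand,
    integral_add (hint (by fun_prop)) (hint (by fun_prop)),
    integral_add (hint (by fun_prop)) (hint (by fun_prop)),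
    intervalIntegral.integral_const_mul, intervalIntegral.integral_const_mul,
    intervalIntegral.integral_const, integral_id, integral_pow, smul_eq_mul]
  ring

theorem two_mul_integral_mul_sub_integral_sq_le_integral_sq {f g : ℝ → ℝ} {a b : ℝ}
    (hab : a ≤ b) (hf : ContinuousOn f (Set.uIcc a b)) (hg : IntervalIntegrable g volume a b)
    (hg2 : IntervalIntegrable (fun y ↦ g y ^ 2) volume a b) :
    2 * (∫ y in a..b, f y * g y) - ∫ y in a..b, f y ^ 2 ≤ ∫ y in a..b, g y ^ 2 := by
  have hfg : IntervalIntegrable (fun y ↦ f y * g y) volume a b := hg.continuousOn_mul hf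
  have hf2 : IntervalIntegrable (fun y ↦ f y ^ 2) volume a b := (hf.pow 2).intervalIntegrable
  rw [← intervalIntegral.integral_const_mul, ← integral_sub (hfg.const_mul 2) hf2]
  exact integral_mono_on hab ((hfg.const_mul 2).sub hf2) hg2
    fun y _ ↦ by nlinarith [sq_nonneg (g y - f y)]

theorem sq_integral_div_add_sq_integral_sub_midpoint_mul_le_integral_sq {g : ℝ → ℝ} {a b : ℝ}
    (hab : a < b) (hg : IntervalIntegrable g volume a b)
    (hg2 : IntervalIntegrable (fun y ↦ g y ^ 2) volume a b) :
    (∫ y in a..b, g y) ^ 2 / (b - a) +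
        12 / (b - a) ^ 3 * (∫ y in a..b, (y - (a + b) / 2) * g y) ^ 2 ≤
      ∫ y in a..b, g y ^ 2 := by
  set I₀ := ∫ y in a..b, g y
  set I₁ := ∫ y in a..b, (y - (a + b) / 2) * g y
  -- `α + β (y - (a + b) / 2)` is the `L²`-projection of `g` onto the affine functions.
  set α := I₀ / (b - a)
  set β := 12 * I₁ / (b - a) ^ 3
  have hmoment : IntervalIntegrable (fun y ↦ (y - (a + b) / 2) * g y) volume a b :=
    hg.continuousOn_mul (by fun_prop)
  have hpair : ∫ y in a..b, (α + β * (y - (a + b) / 2)) * g y = α * I₀ + β * I₁ := by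
    simp_rw [add_mul, mul_assoc]
    rw [integral_add (hg.const_mul α) (hmoment.const_mul β),
      intervalIntegral.integral_const_mul, intervalIntegral.integral_const_mul]
  have key := two_mul_integral_mul_sub_integral_sq_le_integral_sq
    (f := fun y ↦ α + β * (y - (a + b) / 2)) hab.le (by fun_prop) hg hg2
  rw [hpair, integral_add_mul_sub_midpoint_sq] at key
  have hL : b - a ≠ 0 := (sub_pos.mpr hab).ne'
  calc I₀ ^ 2 / (b - a) + 12 / (b - a) ^ 3 * I₁ ^ 2
      = 2 * (α * I₀ + β * I₁) - (α ^ 2 * (b - a) + β ^ 2 * ((b - a) ^ 3 / 12)) := by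
        simp only [α, β]; field_simp; ring
    _ ≤ ∫ y in a..b, g y ^ 2 := key

section IsH2On

variable {a b : ℝ} {w w' w'' : ℝ → ℝ}

theorem IsH2On.integral_deriv (h : IsH2On a b w w' w'') (hab : a ≤ b) :
    ∫ y in a..b, w' y = w b - w a := by
  linarith [h.1 b (Set.right_mem_Icc.mpr hab)]

theorem IsH2On.integral_second_deriv (h : IsH2On a b w w' w'') (hab : a ≤ b) :
    ∫ y in a..b, w'' y = w' b - w' a := by
  linarith [h.2.1 b (Set.right_mem_Icc.mpr hab)]

theorem IsH2On.integral_sub_mul_second_deriv (h : IsH2On a b w w' w'') (hab : a ≤ b) (c : ℝ) :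
    ∫ y in a..b, (y - c) * w'' y =
      (b - c) * (w' b - w' a) - (w b - w a - w' a * (b - a)) := by
  rw [← h.integral_deriv hab, ← h.integral_second_deriv hab]
  obtain ⟨-, hw', hw'_int, hw''_int, -⟩ := h
  have hlin : AbsolutelyContinuousOnInterval (fun y ↦ y - c) a b :=
    ContDiffOn.absolutelyContinuousOnInterval (by fun_prop)
  have hprimitive : ∫ y in a..b, deriv (fun y ↦ y - c) y * ∫ t in a..y, w'' t =
      ∫ y in a..b, (w' y - w' a) := by
    refine integral_congr fun y hy ↦ ?_
    rw [hw' y (Set.uIcc_of_le hab ▸ hy)]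
    simp
  rw [hlin.integral_mul_eq_sub_integral_deriv_mul_primitive hw''_int, hprimitive,
    integral_sub hw'_int intervalIntegrable_const, intervalIntegral.integral_const, smul_eq_mul]
  ring

end IsH2On

theorem second_derivative_lower_bound (a b A₀ A₁ B₀ B₁ : ℝ) (hab : a < b)
    (w w' w'' : ℝ → ℝ) (hH2 : IsH2On a b w w' w'')
    (ha0 : w a = A₀) (ha1 : w' a = A₁) (hb0 : w b = B₀) (hb1 : w' b = B₁) :
    (B₁ - A₁) ^ 2 / (b - a) +
        12 / (b - a) ^ 3 * ((B₀ - A₀) - (A₁ + B₁) * (b - a) / 2) ^ 2 ≤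
      ∫ y in a..b, (w'' y) ^ 2 := by
  have key := sq_integral_div_add_sq_integral_sub_midpoint_mul_le_integral_sq hab hH2.2.2.2.1
    hH2.2.2.2.2
  rw [hH2.integral_second_deriv hab.le, hH2.integral_sub_mul_second_deriv hab.le,
    ha0, ha1, hb0, hb1] at key
  convert key using 3
  ring
end

section
/- Let α, β, γ, M > 0, let a < b, and let w ∈ H²((a,b)) with |w'(a)| ≤ M and |w'(b)| ≤ M. Define A_M := {x ∈ (a,b) : |w'(x)| > M} and Δ_M := ∫_{A_M} |w'(x)| dx. Then ∫_{A_M} ( α w''(x)² + β log(1 + γ w'(x)²) ) dx ≥ 4√(2/3) · α^{1/4} β^{3/4} (log(1 + γ M²))^{3/4} · √( Δ_M - M|A_M| ). -/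
/-!
On each connected component `(c, d)` of `A_M`, `w'` has constant sign `σ`, and `v = σ w' - M` is
positive inside and nonpositive at both ends. Since `v = v c + ∫ σ w''`, integrating by parts gives
`∫ v ≤ ∫ ((c + d) / 2 - s) σ w''`, so by Cauchy–Schwarz `(∫ v)² ≤ (d - c)³ / 12 · ∫ w''²`, while the
logarithmic term is at least `β log (1 + γ M²)` per unit length. The AM–GM inequality
`27 (X + Y)⁴ ≥ 256 X Y³` turns these two bounds into the estimate on each component, and
subadditivity of the square root sums it over the countably many components.
-/

open MeasureTheory intervalIntegral

open Set

theorem mul_pow_three_le_add_pow_four {X Y : ℝ} (hX : 0 ≤ X) (hY : 0 ≤ Y) :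
    256 * X * Y ^ 3 ≤ 27 * (X + Y) ^ 4 := by
  linear_combination mul_nonneg (sq_nonneg (3 * X - Y))
    (by positivity : 0 ≤ 3 * X ^ 2 + 14 * X * Y + 27 * Y ^ 2)

theorem four_mul_sqrt_two_thirds_mul_le {a c E l D : ℝ} (ha : 0 ≤ a) (hc : 0 ≤ c)
    (hE : 0 ≤ E) (hl : 0 ≤ l) (hD : 0 ≤ D) (hDE : D ≤ √(l ^ 3 / 12 * E)) :
    4 * √(2 / 3) * a ^ ((1 : ℝ) / 4) * c ^ ((3 : ℝ) / 4) * √D ≤ a * E + c * l := by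
  have hD2 : D ^ 2 ≤ l ^ 3 / 12 * E := (Real.le_sqrt hD (by positivity)).1 hDE
  have hsqrt4 : ∀ {x : ℝ}, 0 ≤ x → √x ^ 4 = x ^ 2 := fun hx => by
    rw [show 4 = 2 * 2 from rfl, pow_mul, Real.sq_sqrt hx]
  rw [← pow_le_pow_iff_left₀ (by positivity) (by positivity) four_ne_zero]
  calc (4 * √(2 / 3) * a ^ ((1 : ℝ) / 4) * c ^ ((3 : ℝ) / 4) * √D) ^ 4
      = 256 * (4 / 9) * a * c ^ 3 * D ^ 2 := by
        simp only [mul_pow, hsqrt4 hD, hsqrt4 (by norm_num : (0 : ℝ) ≤ 2 / 3),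
          ← Real.rpow_mul_natCast ha, ← Real.rpow_mul_natCast hc]
        norm_num
    _ ≤ 256 * (4 / 9) * a * c ^ 3 * (l ^ 3 / 12 * E) := by gcongr
    _ = 256 * (a * E) * (c * l) ^ 3 / 27 := by ring
    _ ≤ (a * E + c * l) ^ 4 := by
        linarith [mul_pow_three_le_add_pow_four (mul_nonneg ha hE) (mul_nonneg hc hl)]

theorem Real.sqrt_sum_le_sum_sqrt {ι : Type*} (s : Finset ι) {f : ι → ℝ}
    (hf : ∀ i ∈ s, 0 ≤ f i) : √(∑ i ∈ s, f i) ≤ ∑ i ∈ s, √(f i) := by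
  refine Finset.le_sum_of_subadditive_on_pred Real.sqrt (0 ≤ ·) (by simp) (fun x y hx hy => ?_)
    (fun x y hx hy => add_nonneg hx hy) f hf
  rw [Real.sqrt_le_left (by positivity)]
  nlinarith [Real.sq_sqrt hx, Real.sq_sqrt hy, mul_nonneg (Real.sqrt_nonneg x) (Real.sqrt_nonneg y)]

theorem mul_sqrt_le_of_hasSum {ι : Type*} {f g : ι → ℝ} {s t K : ℝ} (hK : 0 ≤ K)
    (hf0 : ∀ i, 0 ≤ f i) (hf : HasSum f s) (hg : HasSum g t) (h : ∀ i, K * √(f i) ≤ g i) :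
    K * √s ≤ t := by
  have hg0 : ∀ i, 0 ≤ g i := fun i => (by positivity : 0 ≤ K * √(f i)).trans (h i)
  refine le_of_tendsto' (((Real.continuous_sqrt.tendsto s).comp hf).const_mul K) fun F => ?_
  calc K * √(∑ i ∈ F, f i) ≤ K * ∑ i ∈ F, √(f i) :=
        mul_le_mul_of_nonneg_left (Real.sqrt_sum_le_sum_sqrt F fun i _ => hf0 i) hK
    _ = ∑ i ∈ F, K * √(f i) := Finset.mul_sum _ _ _
    _ ≤ ∑ i ∈ F, g i := Finset.sum_le_sum fun i _ => h i
    _ ≤ t := sum_le_hasSum F (fun i _ => hg0 i) hg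

theorem mem_connectedComponentIn_of_mem_closure {X : Type*} [TopologicalSpace X]
    [LocallyConnectedSpace X] {U : Set X} (hU : IsOpen U) {x y : X}
    (hy : y ∈ closure (connectedComponentIn U x)) (hyU : y ∈ U) :
    y ∈ connectedComponentIn U x := by
  obtain ⟨z, hzy, hzx⟩ := mem_closure_iff.1 hy _ hU.connectedComponentIn
    (mem_connectedComponentIn hyU)
  rw [connectedComponentIn_eq hzx, ← connectedComponentIn_eq hzy]
  exact mem_connectedComponentIn hyU

theorem Real.connectedComponentIn_eq_Ioo {U : Set ℝ} (hU : IsOpen U)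
    (hUb : Bornology.IsBounded U) {x : ℝ} (hx : x ∈ U) :
    ∃ c d, connectedComponentIn U x = Ioo c d ∧ c ∉ U ∧ d ∉ U := by
  set S := connectedComponentIn U x
  have hS : IsConnected S := isConnected_connectedComponentIn_iff.2 hx
  have hSU : S ⊆ U := connectedComponentIn_subset U x
  have hbb : BddBelow S := (hUb.subset hSU).bddBelow
  have hba : BddAbove S := (hUb.subset hSU).bddAbove
  have hc : sInf S ∉ U := fun hcU => by
    have hcS := mem_connectedComponentIn_of_mem_closure hU (csInf_mem_closure hS.nonempty hbb) hcU
    obtain ⟨l, hl, hlS⟩ := exists_Ioc_subset_of_mem_nhds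
      (hU.connectedComponentIn.mem_nhds hcS) ⟨sInf S - 1, by linarith⟩
    have := csInf_le hbb (hlS ⟨(by linarith : l < (l + sInf S) / 2), by linarith⟩)
    linarith
  have hd : sSup S ∉ U := fun hdU => by
    have hdS := mem_connectedComponentIn_of_mem_closure hU (csSup_mem_closure hS.nonempty hba) hdU
    obtain ⟨u, hu, huS⟩ := exists_Ico_subset_of_mem_nhds
      (hU.connectedComponentIn.mem_nhds hdS) ⟨sSup S + 1, by linarith⟩
    have := le_csSup hba (huS ⟨by linarith, (by linarith : (u + sSup S) / 2 < u)⟩)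
    linarith
  refine ⟨sInf S, sSup S, (hS.Ioo_csInf_csSup_subset hbb hba).antisymm' fun y hy => ?_, hc, hd⟩
  exact ⟨(csInf_le hbb hy).lt_of_ne fun h => hc (h ▸ hSU hy),
    (le_csSup hba hy).lt_of_ne fun h => hd (h ▸ hSU hy)⟩

theorem mul_sqrt_setIntegral_le_of_connectedComponentIn {X : Type*} [TopologicalSpace X]
    [LocallyConnectedSpace X] [TopologicalSpace.SeparableSpace X] [MeasurableSpace X]
    [OpensMeasurableSpace X] {μ : Measure X} {U : Set X} (hU : IsOpen U) {f g : X → ℝ} {K : ℝ}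
    (hK : 0 ≤ K) (hf0 : ∀ x ∈ U, 0 ≤ f x) (hf : IntegrableOn f U μ) (hg : IntegrableOn g U μ)
    (h : ∀ x ∈ U, K * √(∫ y in connectedComponentIn U x, f y ∂μ) ≤
      ∫ y in connectedComponentIn U x, g y ∂μ) :
    K * √(∫ x in U, f x ∂μ) ≤ ∫ x in U, g x ∂μ := by
  set C := connectedComponentIn U '' U
  have hdisj : C.PairwiseDisjoint id := by
    rintro _ ⟨x, -, rfl⟩ _ ⟨y, -, rfl⟩ hne
    exact disjoint_left.2 fun z hzx hzy =>
      hne (by rw [connectedComponentIn_eq hzx, connectedComponentIn_eq hzy])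
  have : Countable C := (hdisj.countable_of_isOpen
    (fun _ ⟨_, _, hS⟩ => hS ▸ hU.connectedComponentIn)
    fun _ ⟨x, hx, hS⟩ => hS ▸ ⟨x, mem_connectedComponentIn hx⟩).to_subtype
  have hUC : ⋃ S : C, (S : Set X) = U := by
    rw [← sUnion_eq_iUnion]
    refine subset_antisymm (sUnion_subset ?_) fun x hx =>
      mem_sUnion_of_mem (mem_connectedComponentIn hx) (mem_image_of_mem _ hx)
    rintro _ ⟨x, -, rfl⟩
    exact connectedComponentIn_subset U x
  have hmeas (S : C) : MeasurableSet (S : Set X) := by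
    obtain ⟨_, _, hS⟩ := S.2
    exact hS ▸ hU.connectedComponentIn.measurableSet
  have hpair : Pairwise (Function.onFun Disjoint fun S : C => (S : Set X)) :=
    fun S T hST => hdisj S.2 T.2 (Subtype.coe_injective.ne hST)
  rw [← hUC] at hf hg ⊢
  refine mul_sqrt_le_of_hasSum hK (fun S => setIntegral_nonneg (hmeas S) fun y hy => hf0 y ?_)
    (hasSum_integral_iUnion hmeas hpair hf) (hasSum_integral_iUnion hmeas hpair hg) fun S => ?_
  · exact hUC ▸ mem_iUnion_of_mem S hy
  · obtain ⟨x, hx, hS⟩ := S.2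
    rw [← hS]
    exact h x hx

theorem integral_mul_le_sqrt_mul_sqrt {α : Type*} [MeasurableSpace α] {μ : Measure α}
    {f g : α → ℝ} (hf : MemLp f 2 μ) (hg : MemLp g 2 μ) :
    ∫ a, f a * g a ∂μ ≤ √(∫ a, f a ^ 2 ∂μ) * √(∫ a, g a ^ 2 ∂μ) := by
  have H := integral_mul_norm_le_Lp_mul_Lq Real.HolderConjugate.two_two
    (by rwa [ENNReal.ofReal_ofNat] : MemLp f (ENNReal.ofReal 2) μ)
    (by rwa [ENNReal.ofReal_ofNat] : MemLp g (ENNReal.ofReal 2) μ)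
  simp only [Real.norm_eq_abs, Real.rpow_two, sq_abs, ← Real.sqrt_eq_rpow, ← abs_mul] at H
  exact (le_abs_self _).trans (MeasureTheory.abs_integral_le_integral_abs.trans H)

theorem continuousOn_of_eq_add_integral {f f' : ℝ → ℝ} {a b : ℝ}
    (hf : ∀ x ∈ Icc a b, f x = f a + ∫ t in a..x, f' t) (hf' : IntervalIntegrable f' volume a b) :
    ContinuousOn f (Icc a b) :=
  (continuousOn_const.add ((hf'.absolutelyContinuousOnInterval_intervalIntegral
    left_mem_uIcc).continuousOn.mono Icc_subset_uIcc)).congr hf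

theorem eq_add_integral_of_mem_Icc {f f' : ℝ → ℝ} {a b c : ℝ}
    (hf : ∀ x ∈ Icc a b, f x = f a + ∫ t in a..x, f' t) (hf' : IntervalIntegrable f' volume a b)
    (hc : c ∈ Icc a b) : ∀ x ∈ Icc a b, f x = f c + ∫ t in c..x, f' t := by
  intro x hx
  rw [hf x hx, hf c hc, add_assoc, integral_add_adjacent_intervals
    (hf'.mono_set (uIcc_subset_uIcc left_mem_uIcc (Icc_subset_uIcc hc)))
    (hf'.mono_set (uIcc_subset_uIcc (Icc_subset_uIcc hc) (Icc_subset_uIcc hx)))]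

theorem integral_integral_eq_integral_sub_mul {g : ℝ → ℝ} {c d : ℝ}
    (hg : IntervalIntegrable g volume c d) :
    ∫ t in c..d, (∫ s in c..t, g s) = ∫ s in c..d, (d - s) * g s := by
  have hu := hg.absolutelyContinuousOnInterval_intervalIntegral left_mem_uIcc
  have hh : AbsolutelyContinuousOnInterval (fun s => s - d) c d :=
    (contDiff_id.sub contDiff_const).contDiffOn.absolutelyContinuousOnInterval
  have hderiv : ∀ᵐ s, s ∈ uIoc c d → deriv (fun t => ∫ s in c..t, g s) s = g s := by
    filter_upwards [hg.ae_hasDerivAt_integral] with s hs hsI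
    exact (hs (uIoc_subset_uIcc hsI) c left_mem_uIcc).deriv
  have := hu.integral_mul_deriv_eq_deriv_mul hh
  simp only [deriv_sub_const, deriv_id'', mul_one, sub_self, mul_zero, integral_same, zero_mul,
    zero_sub] at this
  rw [this, ← intervalIntegral.integral_neg]
  refine integral_congr_ae (hderiv.mono fun s hs hsI => ?_)
  rw [hs hsI]
  ring

theorem integral_le_integral_midpoint_sub_mul {v g : ℝ → ℝ} {c d : ℝ} (hcd : c ≤ d)
    (hv : ∀ t ∈ Icc c d, v t = v c + ∫ s in c..t, g s) (hg : IntervalIntegrable g volume c d)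
    (hvc : v c ≤ 0) (hvd : v d ≤ 0) :
    ∫ t in c..d, v t ≤ ∫ s in c..d, ((c + d) / 2 - s) * g s := by
  have hprim : IntervalIntegrable (fun t => ∫ s in c..t, g s) volume c d :=
    (hg.absolutelyContinuousOnInterval_intervalIntegral
      left_mem_uIcc).continuousOn.intervalIntegrable
  have hv_int : ∫ t in c..d, v t = (d - c) * v c + ∫ s in c..d, (d - s) * g s := by
    rw [integral_congr fun t ht => hv t (uIcc_of_le hcd ▸ ht),
      intervalIntegral.integral_add intervalIntegrable_const hprim, intervalIntegral.integral_const,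
      smul_eq_mul, integral_integral_eq_integral_sub_mul hg]
  have hmid : ∫ s in c..d, ((c + d) / 2 - s) * g s =
      (∫ s in c..d, (d - s) * g s) - (d - c) / 2 * ∫ s in c..d, g s := by
    rw [← intervalIntegral.integral_const_mul, ← intervalIntegral.integral_sub
      (hg.continuousOn_mul (by fun_prop)) (hg.const_mul _)]
    exact integral_congr fun s _ => by ring
  have hvd_eq : v d = v c + ∫ s in c..d, g s := hv d (right_mem_Icc.2 hcd)
  -- the two sides differ by `(d - c) * (v c + v d) / 2`
  nlinarith [mul_nonneg (sub_nonneg.2 hcd) (neg_nonneg.2 (add_nonpos hvc hvd))]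

theorem integral_le_sqrt_of_nonpos_endpoints {v g : ℝ → ℝ} {c d : ℝ} (hcd : c ≤ d)
    (hv : ∀ t ∈ Icc c d, v t = v c + ∫ s in c..t, g s) (hg : IntervalIntegrable g volume c d)
    (hg2 : IntervalIntegrable (fun s => g s ^ 2) volume c d) (hvc : v c ≤ 0) (hvd : v d ≤ 0) :
    ∫ t in c..d, v t ≤ √((d - c) ^ 3 / 12 * ∫ s in c..d, g s ^ 2) := by
  have hφ : MemLp (fun s => (c + d) / 2 - s) 2 (volume.restrict (Ioc c d)) :=
    (memLp_two_iff_integrable_sq (by fun_prop)).2 (Continuous.integrableOn_Ioc (by fun_prop))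
  have hg' : MemLp g 2 (volume.restrict (Ioc c d)) :=
    (memLp_two_iff_integrable_sq hg.1.aestronglyMeasurable).2 hg2.1
  have hφ2 : ∫ s in c..d, ((c + d) / 2 - s) ^ 2 = (d - c) ^ 3 / 12 := by
    simp [intervalIntegral.integral_comp_sub_left fun s => s ^ 2]
    ring
  calc ∫ t in c..d, v t ≤ ∫ s in c..d, ((c + d) / 2 - s) * g s :=
        integral_le_integral_midpoint_sub_mul hcd hv hg hvc hvd
    _ ≤ √(∫ s in c..d, ((c + d) / 2 - s) ^ 2) * √(∫ s in c..d, g s ^ 2) := by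
        simp only [intervalIntegral.integral_of_le hcd]
        exact integral_mul_le_sqrt_mul_sqrt hφ hg'
    _ = √((d - c) ^ 3 / 12 * ∫ s in c..d, g s ^ 2) := by
        rw [hφ2, Real.sqrt_mul (by have := sub_nonneg.2 hcd; positivity)]

theorem setIntegral_abs_sub_le_sqrt {u g : ℝ → ℝ} {c d M : ℝ} (hcd : c ≤ d)
    (hu : ∀ x ∈ Icc c d, u x = u c + ∫ t in c..x, g t) (hg : IntervalIntegrable g volume c d)
    (hg2 : IntervalIntegrable (fun t => g t ^ 2) volume c d)
    (hin : ∀ x ∈ Ioo c d, M < |u x|) (hc : |u c| ≤ M) (hd : |u d| ≤ M) :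
    ∫ x in Ioo c d, (|u x| - M) ≤ √((d - c) ^ 3 / 12 * ∫ x in Ioo c d, g x ^ 2) := by
  have hM : 0 ≤ M := (abs_nonneg _).trans hc
  have hcont : ContinuousOn u (Ioo c d) :=
    (continuousOn_of_eq_add_integral hu hg).mono Ioo_subset_Icc_self
  have hIoo (φ : ℝ → ℝ) : ∫ x in Ioo c d, φ x = ∫ x in c..d, φ x := by
    rw [intervalIntegral.integral_of_le hcd, integral_Ioc_eq_integral_Ioo]
  rw [hIoo fun x => g x ^ 2]
  rcases isPreconnected_Ioo.eq_or_eq_neg_of_sq_eq hcont.abs hcont (fun x _ => sq_abs (u x))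
    fun hx h0 => by linarith [h0 ▸ hin _ hx, abs_zero (α := ℝ)] with hpos | hneg
  · calc ∫ x in Ioo c d, (|u x| - M) = ∫ x in c..d, (u x - M) := by
          rw [← hIoo]
          exact setIntegral_congr_fun measurableSet_Ioo fun x hx => by
            simp only [show |u x| = u x from hpos hx]
      _ ≤ _ := integral_le_sqrt_of_nonpos_endpoints hcd (fun t ht => by rw [hu t ht]; ring) hg hg2
          (by linarith [le_abs_self (u c)]) (by linarith [le_abs_self (u d)])
  · calc ∫ x in Ioo c d, (|u x| - M) = ∫ x in c..d, (-u x - M) := by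
          rw [← hIoo]
          exact setIntegral_congr_fun measurableSet_Ioo fun x hx => by
            simp only [show |u x| = -u x from hneg hx]
      _ ≤ _ := by
          simpa only [Pi.neg_apply, neg_sq] using integral_le_sqrt_of_nonpos_endpoints (g := -g) hcd
            (fun t ht => by rw [hu t ht, Pi.neg_def, intervalIntegral.integral_neg]; ring) hg.neg
            (by simpa only [Pi.neg_apply, neg_sq] using hg2) (by linarith [neg_le_abs (u c)])
            (by linarith [neg_le_abs (u d)])

theorem perona_malik_component_bound {α β γ M c d : ℝ} {w' w'' : ℝ → ℝ} (hα : 0 ≤ α)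
    (hβ : 0 ≤ β) (hγ : 0 ≤ γ) (hcd : c ≤ d)
    (hw' : ∀ x ∈ Icc c d, w' x = w' c + ∫ t in c..x, w'' t)
    (hw'' : IntervalIntegrable w'' volume c d)
    (hw''2 : IntervalIntegrable (fun t => w'' t ^ 2) volume c d)
    (hin : ∀ x ∈ Ioo c d, M < |w' x|) (hc : |w' c| ≤ M) (hd : |w' d| ≤ M)
    (hF : IntegrableOn (fun x => α * w'' x ^ 2 + β * Real.log (1 + γ * w' x ^ 2)) (Ioo c d)) :
    4 * √(2 / 3) * α ^ ((1 : ℝ) / 4) * β ^ ((3 : ℝ) / 4) *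
        Real.log (1 + γ * M ^ 2) ^ ((3 : ℝ) / 4) * √(∫ x in Ioo c d, (|w' x| - M)) ≤
      ∫ x in Ioo c d, (α * w'' x ^ 2 + β * Real.log (1 + γ * w' x ^ 2)) := by
  have hM : 0 ≤ M := (abs_nonneg _).trans hc
  set L := Real.log (1 + γ * M ^ 2)
  have hL : 0 ≤ L := Real.log_nonneg (le_add_of_nonneg_right (by positivity))
  have hw''2' : IntegrableOn (fun x => w'' x ^ 2) (Ioo c d) :=
    hw''2.1.mono_set Ioo_subset_Ioc_self
  have hL_int : IntegrableOn (fun _ => β * L) (Ioo c d) := integrableOn_const measure_Ioo_lt_top.ne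
  set E := ∫ x in Ioo c d, w'' x ^ 2
  have hE : 0 ≤ E := setIntegral_nonneg measurableSet_Ioo fun _ _ => sq_nonneg _
  have hD : 0 ≤ ∫ x in Ioo c d, (|w' x| - M) :=
    setIntegral_nonneg measurableSet_Ioo fun x hx => sub_nonneg.2 (hin x hx).le
  have henergy : α * E + β * L * (d - c) ≤
      ∫ x in Ioo c d, (α * w'' x ^ 2 + β * Real.log (1 + γ * w' x ^ 2)) := by
    calc α * E + β * L * (d - c) = ∫ x in Ioo c d, (α * w'' x ^ 2 + β * L) := by
          rw [integral_add (hw''2'.const_mul α) hL_int, MeasureTheory.integral_const_mul,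
            setIntegral_const,
            Real.volume_real_Ioo_of_le hcd, smul_eq_mul]
          ring
      _ ≤ _ := by
          refine setIntegral_mono_on ((hw''2'.const_mul α).add hL_int) hF measurableSet_Ioo
            fun x hx => ?_
          have hMx : M ^ 2 ≤ w' x ^ 2 := sq_abs (w' x) ▸ pow_le_pow_left₀ hM (hin x hx).le 2
          gcongr
          exact Real.log_le_log (by positivity) (by gcongr)
  calc _ = 4 * √(2 / 3) * α ^ ((1 : ℝ) / 4) * (β * L) ^ ((3 : ℝ) / 4) *
        √(∫ x in Ioo c d, (|w' x| - M)) := by rw [Real.mul_rpow hβ hL]; ring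
    _ ≤ α * E + β * L * (d - c) := four_mul_sqrt_two_thirds_mul_le hα (mul_nonneg hβ hL) hE
          (sub_nonneg.2 hcd) hD (setIntegral_abs_sub_le_sqrt hcd hw' hw'' hw''2 hin hc hd)
    _ ≤ _ := henergy

theorem perona_malik_component_bound_of_maximal {α β γ M a b c d : ℝ} {w' w'' : ℝ → ℝ}
    (hα : 0 ≤ α) (hβ : 0 ≤ β) (hγ : 0 ≤ γ)
    (hw' : ∀ x ∈ Icc a b, w' x = w' a + ∫ t in a..x, w'' t)
    (hw'' : IntervalIntegrable w'' volume a b)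
    (hw''2 : IntervalIntegrable (fun t => w'' t ^ 2) volume a b)
    (hwa : |w' a| ≤ M) (hwb : |w' b| ≤ M) (hcd : c < d)
    (hsub : Ioo c d ⊆ {x ∈ Ioo a b | M < |w' x|}) (hc : c ∉ {x ∈ Ioo a b | M < |w' x|})
    (hd : d ∉ {x ∈ Ioo a b | M < |w' x|})
    (hF : IntegrableOn (fun x => α * w'' x ^ 2 + β * Real.log (1 + γ * w' x ^ 2)) (Ioo c d)) :
    4 * √(2 / 3) * α ^ ((1 : ℝ) / 4) * β ^ ((3 : ℝ) / 4) *
        Real.log (1 + γ * M ^ 2) ^ ((3 : ℝ) / 4) * √(∫ x in Ioo c d, (|w' x| - M)) ≤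
      ∫ x in Ioo c d, (α * w'' x ^ 2 + β * Real.log (1 + γ * w' x ^ 2)) := by
  have hle : ∀ x ∈ Icc a b, x ∉ {x ∈ Ioo a b | M < |w' x|} → |w' x| ≤ M := fun x hx hxA => by
    rcases hx.1.eq_or_lt with rfl | hax
    · exact hwa
    rcases hx.2.eq_or_lt with rfl | hxb
    · exact hwb
    exact not_lt.1 fun h => hxA ⟨⟨hax, hxb⟩, h⟩
  obtain ⟨hac, hdb⟩ := (Ioo_subset_Ioo_iff hcd).1 (hsub.trans fun y hy => hy.1)
  have hcab : c ∈ Icc a b := ⟨hac, hcd.le.trans hdb⟩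
  have hdab : d ∈ Icc a b := ⟨hac.trans hcd.le, hdb⟩
  have hcd_ab : uIcc c d ⊆ uIcc a b :=
    uIcc_subset_uIcc (Icc_subset_uIcc hcab) (Icc_subset_uIcc hdab)
  exact perona_malik_component_bound hα hβ hγ hcd.le
    (fun t ht => eq_add_integral_of_mem_Icc hw' hw'' hcab t (Icc_subset_Icc hac hdb ht))
    (hw''.mono_set hcd_ab) (hw''2.mono_set hcd_ab) (fun y hy => (hsub hy).2) (hle c hcab hc)
    (hle d hdab hd) hF

theorem perona_malik_energy_lower_bound_general (α β γ M a b : ℝ)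
    (hα : 0 < α) (hβ : 0 < β) (hγ : 0 < γ)
    (w w' w'' : ℝ → ℝ) (hH2 : IsH2On a b w w' w'')
    (hwa : |w' a| ≤ M) (hwb : |w' b| ≤ M)
    (hint1 : IntegrableOn
      (fun x => α * (w'' x) ^ 2 + β * Real.log (1 + γ * (w' x) ^ 2))
      {x ∈ Set.Ioo a b | M < |w' x|} volume)
    (hint2 : IntegrableOn (fun x => |w' x|) {x ∈ Set.Ioo a b | M < |w' x|} volume) :
    4 * Real.sqrt (2 / 3) * α ^ ((1 : ℝ) / 4) * β ^ ((3 : ℝ) / 4) *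
        (Real.log (1 + γ * M ^ 2)) ^ ((3 : ℝ) / 4) *
        Real.sqrt ((∫ x in {x ∈ Set.Ioo a b | M < |w' x|}, |w' x|) -
          M * (volume {x ∈ Set.Ioo a b | M < |w' x|}).toReal) ≤
      ∫ x in {x ∈ Set.Ioo a b | M < |w' x|},
        (α * (w'' x) ^ 2 + β * Real.log (1 + γ * (w' x) ^ 2)) := by
  obtain ⟨-, hw', -, hw'', hw''2⟩ := hH2
  set A := {x ∈ Ioo a b | M < |w' x|}
  have hA : IsOpen A := ((continuousOn_of_eq_add_integral hw' hw'').mono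
    Ioo_subset_Icc_self).isOpen_inter_preimage isOpen_Ioo
    (isOpen_lt continuous_const continuous_abs)
  have hAb : Bornology.IsBounded A := Metric.isBounded_Ioo a b |>.subset fun x hx => hx.1
  have hM_int : IntegrableOn (fun _ => M) A := integrableOn_const hAb.measure_lt_top.ne
  rw [show (∫ x in A, |w' x|) - M * (volume A).toReal = ∫ x in A, (|w' x| - M) by
    rw [integral_sub hint2 hM_int, setIntegral_const, smul_eq_mul, measureReal_def, mul_comm]]
  have hL : 0 ≤ Real.log (1 + γ * M ^ 2) :=
    Real.log_nonneg (le_add_of_nonneg_right (by positivity))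
  refine mul_sqrt_setIntegral_le_of_connectedComponentIn hA
    (mul_nonneg (by positivity) (Real.rpow_nonneg hL _))
    (fun x hx => sub_nonneg.2 hx.2.le) (hint2.sub hM_int) hint1 fun x hx => ?_
  obtain ⟨c, d, hS, hc, hd⟩ := Real.connectedComponentIn_eq_Ioo hA hAb hx
  have hxcd : x ∈ Ioo c d := hS ▸ mem_connectedComponentIn hx
  have hsub : Ioo c d ⊆ A := hS ▸ connectedComponentIn_subset A x
  rw [hS]
  exact perona_malik_component_bound_of_maximal hα.le hβ.le hγ.le hw' hw'' hw''2 hwa hwb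
    (hxcd.1.trans hxcd.2) hsub hc hd (hint1.mono_set hsub)

theorem perona_malik_energy_lower_bound (α β γ M a b : ℝ)
    (hα : 0 < α) (hβ : 0 < β) (hγ : 0 < γ) (hM : 0 < M) (hab : a < b)
    (w w' w'' : ℝ → ℝ) (hH2 : IsH2On a b w w' w'')
    (hwa : |w' a| ≤ M) (hwb : |w' b| ≤ M)
    (hint1 : IntegrableOn
      (fun x => α * (w'' x) ^ 2 + β * Real.log (1 + γ * (w' x) ^ 2))
      {x ∈ Set.Ioo a b | M < |w' x|} volume)
    (hint2 : IntegrableOn (fun x => |w' x|) {x ∈ Set.Ioo a b | M < |w' x|} volume) :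
    4 * Real.sqrt (2 / 3) * α ^ ((1 : ℝ) / 4) * β ^ ((3 : ℝ) / 4) *
        (Real.log (1 + γ * M ^ 2)) ^ ((3 : ℝ) / 4) *
        Real.sqrt ((∫ x in {x ∈ Set.Ioo a b | M < |w' x|}, |w' x|) -
          M * (volume {x ∈ Set.Ioo a b | M < |w' x|}).toReal) ≤
      ∫ x in {x ∈ Set.Ioo a b | M < |w' x|},
        (α * (w'' x) ^ 2 + β * Real.log (1 + γ * (w' x) ^ 2)) :=
  perona_malik_energy_lower_bound_general α β γ M a b hα hβ hγ w w' w'' hH2 hwa hwb hint1 hint2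
end
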